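/- For all natural numbers r, u, m, n, k and i ∈ {0,1}: D_k^{(i)}(r,u,m,n) = [r, k] · D_{r,u,m}^{((r+k+i) mod 2)}(n). -/

import Mathlib

open scoped Classical

/-- Parity of a permutation: `0` if even, `1` if odd. -/
noncomputable def parity {α : Type*} [Fintype α] [DecidableEq α] (σ : Equiv.Perm α) : ℕ :=
  if Equiv.Perm.sign σ = 1 then 0 else 1

/-- The set `𝒟(r,u,m,n)`: permutations `σ` of `{0,…,r+n-1}` (modelling `{1,…,r+n}`,
with the first `r` elements playing the role of `{1,…,r}`) such that `σ x = y` for exactly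
`u` pairs `(x,y)` with `x, y` among the first `r` elements, and exactly `m` elements among
the last `n` elements are fixed points. -/
noncomputable def Dgen (r u m n : ℕ) : Finset (Equiv.Perm (Fin (r + n))) :=
  Finset.univ.filter (fun σ =>
    ((Finset.univ : Finset (Fin (r + n))).filter
      (fun x : Fin (r + n) => (x : ℕ) < r ∧ ((σ x : ℕ) < r))).card = u ∧
    ((Finset.univ : Finset (Fin (r + n))).filter
      (fun t : Fin (r + n) => r ≤ (t : ℕ) ∧ σ t = t)).card = m)

/-- The set `𝒟_{r,u,m}(n)`: permutations `σ` of `{0,…,r+n-1}` in which any two distinct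
elements among the first `r` lie in disjoint cycles, exactly `u` of the first `r` elements
are fixed points, and exactly `m` of the last `n` elements are fixed points. -/
noncomputable def Drum (r u m n : ℕ) : Finset (Equiv.Perm (Fin (r + n))) :=
  Finset.univ.filter (fun σ =>
    (∀ x y : Fin (r + n), (x : ℕ) < r → (y : ℕ) < r → x ≠ y → ¬ σ.SameCycle x y) ∧
    ((Finset.univ : Finset (Fin (r + n))).filter
      (fun z : Fin (r + n) => (z : ℕ) < r ∧ σ z = z)).card = u ∧
    ((Finset.univ : Finset (Fin (r + n))).filter
      (fun t : Fin (r + n) => r ≤ (t : ℕ) ∧ σ t = t)).card = m)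

/-- The number of disjoint cycles of `σ` containing at least one of the first `r` elements:
we count the distinct sets `{y : y is in the same cycle of σ as x}` for `x` among the
first `r` elements. -/
noncomputable def touchingCycles (r n : ℕ) (σ : Equiv.Perm (Fin (r + n))) : ℕ :=
  (((Finset.univ : Finset (Fin (r + n))).filter (fun x : Fin (r + n) => (x : ℕ) < r)).image
    (fun x => (Finset.univ : Finset (Fin (r + n))).filter (fun y => σ.SameCycle x y))).card

/-- The set of `r`-derangements of length `r+n`: fixed-point-free permutations in which
any two distinct elements among the first `r` lie in disjoint cycles. -/
noncomputable def rDerSet (r n : ℕ) : Finset (Equiv.Perm (Fin (r + n))) :=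
  Finset.univ.filter (fun σ =>
    (∀ x, σ x ≠ x) ∧
    (∀ x y : Fin (r + n), (x : ℕ) < r → (y : ℕ) < r → x ≠ y → ¬ σ.SameCycle x y))

/-- `D_r(n)`, the number of `r`-derangements. -/
noncomputable def Dr (r n : ℕ) : ℕ := (rDerSet r n).card

/-- `D_r^{(i)}(n)`, the number of `r`-derangements of parity `i`. -/
noncomputable def Dri (r i n : ℕ) : ℕ :=
  ((rDerSet r n).filter (fun σ => parity σ = i)).card

/-- Unsigned Stirling numbers of the first kind. -/
def stirling1 : ℕ → ℕ → ℕ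
  | 0, 0 => 1
  | 0, _ + 1 => 0
  | _ + 1, 0 => 0
  | n + 1, k + 1 => n * stirling1 n (k + 1) + stirling1 n k


open Equiv Equiv.Perm Finset
set_option linter.unusedSectionVars false
set_option linter.unusedVariables false
set_option maxHeartbeats 1000000
set_option linter.unusedSectionVars false

section Ret
variable {α : Type*} [Fintype α] [DecidableEq α]

lemma exists_ret (σ : Perm α) (S : Finset α) {x : α} (hx : x ∈ S) :
    ∃ j, 0 < j ∧ (σ ^ j) x ∈ S :=
  ⟨orderOf σ, orderOf_pos σ, by rw [pow_orderOf_eq_one]; simpa⟩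

noncomputable def retN (σ : Perm α) (S : Finset α) (x : α) : ℕ :=
  if h : ∃ j, 0 < j ∧ (σ ^ j) x ∈ S then Nat.find h else 1

noncomputable def ret (σ : Perm α) (S : Finset α) (x : α) : α :=
  (σ ^ retN σ S x) x

variable {σ : Perm α} {S : Finset α} {x y : α}

lemma retN_pos (hx : x ∈ S) : 0 < retN σ S x := by
  rw [retN, dif_pos (exists_ret σ S hx)]
  exact (Nat.find_spec (exists_ret σ S hx)).1

lemma ret_mem (hx : x ∈ S) : ret σ S x ∈ S := by
  rw [ret, retN, dif_pos (exists_ret σ S hx)]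
  exact (Nat.find_spec (exists_ret σ S hx)).2

lemma retN_min (hx : x ∈ S) {j : ℕ} (h0 : 0 < j) (hj : j < retN σ S x) :
    (σ ^ j) x ∉ S := by
  rw [retN, dif_pos (exists_ret σ S hx)] at hj
  intro hmem
  exact Nat.find_min (exists_ret σ S hx) hj ⟨h0, hmem⟩

lemma retN_eq (hx : x ∈ S) {j : ℕ} (h0 : 0 < j) (hj : (σ ^ j) x ∈ S)
    (hmin : ∀ i, 0 < i → i < j → (σ ^ i) x ∉ S) : retN σ S x = j := by
  rw [retN, dif_pos (exists_ret σ S hx)]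
  refine le_antisymm (Nat.find_le ⟨h0, hj⟩) ?_
  by_contra h
  push_neg at h
  obtain ⟨h1, h2⟩ := Nat.find_spec (exists_ret σ S hx)
  exact hmin _ h1 h h2

lemma ret_inj (hx : x ∈ S) (hy : y ∈ S) (h : ret σ S x = ret σ S y) : x = y := by
  have hpx := retN_pos (σ := σ) hx
  have hpy := retN_pos (σ := σ) hy
  have key : ∀ a b : α, a ∈ S → b ∈ S → retN σ S a ≤ retN σ S b →
      ret σ S a = ret σ S b → a = b := by
    intro a b ha hb hle hab
    rcases eq_or_lt_of_le hle with heq | hlt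
    · rw [ret, ret, heq] at hab
      exact (σ ^ retN σ S b).injective hab
    · exfalso
      have hpa := retN_pos (σ := σ) ha
      have h1 : (σ ^ retN σ S a) ((σ ^ (retN σ S b - retN σ S a)) b) =
          (σ ^ retN σ S a) a := by
        rw [← Equiv.Perm.mul_apply, ← pow_add, Nat.add_sub_cancel' hle, ← ret, ← ret, hab]
      have h2 : (σ ^ (retN σ S b - retN σ S a)) b = a := (σ ^ retN σ S a).injective h1
      exact retN_min hb (by omega) (by omega) (h2 ▸ ha)
  rcases le_total (retN σ S x) (retN σ S y) with hle | hle
  · exact key x y hx hy hle h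
  · exact (key y x hy hx hle h.symm).symm

lemma ret_iterate_mem (hx : x ∈ S) (c : ℕ) : (ret σ S)^[c] x ∈ S := by
  induction c with
  | zero => simpa
  | succ c ih => rw [Function.iterate_succ_apply']; exact ret_mem ih

/-- every return to `S` along the orbit is a `ret`-iterate -/
lemma pow_mem_eq_iterate (hx : x ∈ S) :
    ∀ j : ℕ, (σ ^ j) x ∈ S → ∃ c, (ret σ S)^[c] x = (σ ^ j) x := by
  intro j
  induction j using Nat.strong_induction_on generalizing x with
  | _ j ih =>
    intro hj
    rcases Nat.eq_zero_or_pos j with rfl | hjpos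
    · exact ⟨0, rfl⟩
    · have hle : retN σ S x ≤ j := by
        by_contra hcon
        push_neg at hcon
        exact retN_min hx hjpos hcon hj
      have hpos : 0 < retN σ S x := retN_pos hx
      rcases eq_or_lt_of_le hle with heq | hlt
      · exact ⟨1, by rw [Function.iterate_one, ret, heq]⟩
      · have hstep : (σ ^ (j - retN σ S x)) (ret σ S x) = (σ ^ j) x := by
          rw [ret, ← Equiv.Perm.mul_apply, ← pow_add, Nat.sub_add_cancel hle]
        obtain ⟨c, hc⟩ := ih (j - retN σ S x) (by omega) (ret_mem hx) (hstep ▸ hj)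
        exact ⟨c + 1, by rw [Function.iterate_succ_apply, hc, hstep]⟩

lemma sameCycle_iff_iterate (hx : x ∈ S) (hy : y ∈ S) :
    σ.SameCycle x y ↔ ∃ c, (ret σ S)^[c] x = y := by
  constructor
  · intro h
    obtain ⟨j, hj, hjy⟩ := h.exists_pow_eq'
    exact hjy ▸ pow_mem_eq_iterate hx j (hjy ▸ hy)
  · rintro ⟨c, rfl⟩
    clear hy
    induction c with
    | zero => simp [Equiv.Perm.SameCycle.refl]
    | succ c ih =>
      rw [Function.iterate_succ_apply']
      exact ih.trans ⟨retN σ S ((ret σ S)^[c] x), rfl⟩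

end Ret
set_option linter.unusedSectionVars false

section Orb
variable {α : Type*} [Fintype α] [DecidableEq α]

noncomputable def orbFinset (σ : Perm α) (x : α) : Finset α := univ.filter (σ.SameCycle x)

lemma mem_orbFinset {σ : Perm α} {x y : α} : y ∈ orbFinset σ x ↔ σ.SameCycle x y := by
  simp [orbFinset]

lemma orbFinset_eq_iff {σ : Perm α} {x y : α} :
    orbFinset σ x = orbFinset σ y ↔ σ.SameCycle x y := by
  constructor
  · intro h
    have hy : y ∈ orbFinset σ y := mem_orbFinset.mpr (Equiv.Perm.SameCycle.refl σ y)
    rw [← h] at hy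
    exact mem_orbFinset.mp hy
  · intro h
    ext z
    rw [mem_orbFinset, mem_orbFinset]
    exact ⟨fun hz => h.symm.trans hz, fun hz => h.trans hz⟩

noncomputable def orbCount (σ : Perm α) : ℕ := ((univ : Finset α).image (orbFinset σ)).card

lemma orbCount_le (σ : Perm α) : orbCount σ ≤ Fintype.card α :=
  le_trans (Finset.card_image_le) (by simp)

end Orb

section Transfer
variable {α β γ δ : Type*} [DecidableEq α] [DecidableEq β] [DecidableEq γ] [DecidableEq δ]

lemma card_image_transfer {s : Finset α} {t : Finset β} (F : α → β)
    (hmem : ∀ a ∈ s, F a ∈ t) (hsurj : ∀ b ∈ t, ∃ a ∈ s, F a = b)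
    (f : α → γ) (g : β → δ)
    (hiff : ∀ a ∈ s, ∀ a' ∈ s, (f a = f a' ↔ g (F a) = g (F a'))) :
    (s.image f).card = (t.image g).card := by
  classical
  refine Finset.card_bij (fun c hc => g (F (Classical.choose (Finset.mem_image.mp hc))))
    ?_ ?_ ?_
  · intro c hc
    obtain ⟨ha, _⟩ := Classical.choose_spec (Finset.mem_image.mp hc)
    exact Finset.mem_image_of_mem g (hmem _ ha)
  · intro c hc c' hc' h
    obtain ⟨ha, hfa⟩ := Classical.choose_spec (Finset.mem_image.mp hc)
    obtain ⟨ha', hfa'⟩ := Classical.choose_spec (Finset.mem_image.mp hc')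
    rw [← hfa, ← hfa']
    exact (hiff _ ha _ ha').mpr h
  · intro d hd
    obtain ⟨b, hb, hgb⟩ := Finset.mem_image.mp hd
    obtain ⟨a, ha, hFa⟩ := hsurj b hb
    refine ⟨f a, Finset.mem_image_of_mem f ha, ?_⟩
    obtain ⟨ha', hfa'⟩ := Classical.choose_spec (Finset.mem_image.mp (Finset.mem_image_of_mem f ha))
    rw [← hgb, ← hFa]
    exact (hiff _ ha' _ ha).mp hfa'

end Transfer

section Stirling

variable {r : ℕ}

-- S = nonzero elements of Fin (r+1)
noncomputable def Snz (r : ℕ) : Finset (Fin (r + 1)) := univ.filter (fun z => z ≠ 0)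

lemma ret_succ (p : Fin (r + 1)) (e : Perm (Fin r)) (x : Fin r) :
    ret (Equiv.Perm.decomposeFin.symm (p, e)) (Snz r) x.succ = (e x).succ := by
  set σ := Equiv.Perm.decomposeFin.symm (p, e) with hσ
  have hx : x.succ ∈ Snz r := by simp [Snz, Fin.succ_ne_zero]
  have happ : σ x.succ = Equiv.swap 0 p (e x).succ := Equiv.Perm.decomposeFin_symm_apply_succ e p x
  by_cases h : (e x).succ = p
  · -- σ x.succ = 0, σ 0 = p = (e x).succ
    have h1 : σ x.succ = 0 := by rw [happ, h, Equiv.swap_apply_right]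
    have h2 : (σ ^ 2) x.succ = (e x).succ := by
      rw [pow_succ, pow_one, Equiv.Perm.mul_apply, h1,
        Equiv.Perm.decomposeFin_symm_apply_zero, h]
    have hN : retN σ (Snz r) x.succ = 2 := by
      refine retN_eq hx (by norm_num) (by rw [h2]; simp [Snz, Fin.succ_ne_zero]) ?_
      intro i h0 hi
      interval_cases i
      rw [pow_one, h1]
      simp [Snz]
    rw [ret, hN, h2]
  · have h1 : σ x.succ = (e x).succ := by
      rw [happ, Equiv.swap_apply_of_ne_of_ne (Fin.succ_ne_zero _) h]
    have hN : retN σ (Snz r) x.succ = 1 := by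
      refine retN_eq hx (by norm_num) (by rw [pow_one, h1]; simp [Snz, Fin.succ_ne_zero]) ?_
      intro i h0 hi
      omega
    rw [ret, hN, pow_one, h1]

lemma sameCycle_succ_iff (p : Fin (r + 1)) (e : Perm (Fin r)) (x y : Fin r) :
    (Equiv.Perm.decomposeFin.symm (p, e)).SameCycle x.succ y.succ ↔ e.SameCycle x y := by
  set σ := Equiv.Perm.decomposeFin.symm (p, e) with hσ
  have hx : x.succ ∈ Snz r := by simp [Snz, Fin.succ_ne_zero]
  have hy : y.succ ∈ Snz r := by simp [Snz, Fin.succ_ne_zero]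
  have hit : ∀ c : ℕ, ∀ z : Fin r, (ret σ (Snz r))^[c] z.succ = ((e ^ c) z).succ := by
    intro c
    induction c with
    | zero => intro z; simp
    | succ c ih =>
      intro z
      rw [Function.iterate_succ_apply, ret_succ, ih, pow_succ]
      rfl
  rw [sameCycle_iff_iterate hx hy]
  constructor
  · rintro ⟨c, hc⟩
    rw [hit c x] at hc
    exact ⟨(c : ℤ), by exact_mod_cast Fin.succ_injective _ hc⟩
  · intro h
    obtain ⟨c, _, hc⟩ := h.exists_pow_eq'
    exact ⟨c, by rw [hit c x, hc]⟩

lemma orbCount_decomposeFin (p : Fin (r + 1)) (e : Perm (Fin r)) :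
    orbCount (Equiv.Perm.decomposeFin.symm (p, e)) =
      orbCount e + (if p = 0 then 1 else 0) := by
  set σ := Equiv.Perm.decomposeFin.symm (p, e) with hσ
  have huniv : (univ : Finset (Fin (r + 1))) = insert 0 (Snz r) := by
    ext z
    simp [Snz]
    tauto
  have hScard : ((Snz r).image (orbFinset σ)).card = orbCount e := by
    refine (card_image_transfer (Fin.succ) (fun a _ => by simp [Snz, Fin.succ_ne_zero])
      (fun b hb => ?_) (orbFinset e) (orbFinset σ) (fun a _ a' _ => ?_)).symm
    · obtain ⟨c, rfl⟩ := Fin.eq_succ_of_ne_zero (by simpa [Snz] using hb)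
      exact ⟨c, mem_univ c, rfl⟩
    · rw [orbFinset_eq_iff, orbFinset_eq_iff, sameCycle_succ_iff]
  rw [orbCount, huniv, Finset.image_insert]
  by_cases hp : p = 0
  · -- 0 is a fixed point, orbFinset σ 0 = {0} which is not in the image over Snz
    have h0 : σ 0 = 0 := by rw [hσ, hp]; exact Equiv.Perm.decomposeFin_symm_apply_zero 0 e
    have horb : orbFinset σ 0 = {0} := by
      ext z
      rw [mem_orbFinset, Finset.mem_singleton]
      constructor
      · rintro ⟨i, hi⟩
        rw [← hi, Equiv.Perm.zpow_apply_eq_self_of_apply_eq_self h0]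
      · rintro rfl
        exact Equiv.Perm.SameCycle.refl σ 0
    have hnotmem : orbFinset σ 0 ∉ (Snz r).image (orbFinset σ) := by
      rw [horb]
      intro hmem
      obtain ⟨z, hz, hzeq⟩ := Finset.mem_image.mp hmem
      have : z ∈ orbFinset σ z := mem_orbFinset.mpr (Equiv.Perm.SameCycle.refl σ z)
      rw [hzeq, Finset.mem_singleton] at this
      simp [Snz, this] at hz
    rw [Finset.card_insert_of_notMem hnotmem, hScard, if_pos hp]
  · -- σ 0 = p, same orbit as p ∈ Snz
    have h0 : σ 0 = p := Equiv.Perm.decomposeFin_symm_apply_zero p e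
    have horb : orbFinset σ 0 = orbFinset σ p :=
      orbFinset_eq_iff.mpr ⟨1, by simpa using h0⟩
    have hmem : orbFinset σ 0 ∈ (Snz r).image (orbFinset σ) := by
      rw [horb]
      exact Finset.mem_image_of_mem _ (by simp [Snz, hp])
    rw [Finset.card_insert_of_mem hmem, hScard, if_neg hp]; ring

end Stirling

section StirCount

lemma card_orbCount_eq (r k : ℕ) :
    ((univ : Finset (Perm (Fin r))).filter (fun π => orbCount π = k)).card =
      stirling1 r k := by
  induction r generalizing k with
  | zero =>
    have h1 : ∀ π : Perm (Fin 0), orbCount π = 0 := by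
      intro π
      rw [orbCount]
      simp [Finset.univ_eq_empty]
    cases k with
    | zero =>
      rw [Finset.filter_true_of_mem (fun π _ => h1 π)]
      simp [stirling1, Finset.card_univ]
    | succ k =>
      rw [Finset.filter_false_of_mem (fun π _ => by simp [h1 π])]
      simp [stirling1]
  | succ r ih =>
    cases k with
    | zero =>
      rw [Finset.filter_false_of_mem, Finset.card_empty]
      · rfl
      · intro σ _
        have : orbFinset σ 0 ∈ univ.image (orbFinset σ) :=
          Finset.mem_image_of_mem _ (mem_univ 0)
        simp only [orbCount]
        exact fun h => by
          rw [Finset.card_eq_zero] at h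
          rw [h] at this
          exact absurd this (Finset.notMem_empty _)
    | succ k =>
      have hbij : ((univ : Finset (Perm (Fin (r + 1)))).filter
            (fun π => orbCount π = k + 1)).card =
          ((univ : Finset (Fin (r + 1) × Perm (Fin r))).filter
            (fun pe => orbCount (Equiv.Perm.decomposeFin.symm pe) = k + 1)).card := by
        refine Finset.card_bij' (fun σ _ => Equiv.Perm.decomposeFin σ)
          (fun pe _ => Equiv.Perm.decomposeFin.symm pe) ?_ ?_ ?_ ?_
        · intro σ hσ
          simp only [mem_filter, mem_univ, true_and] at hσ ⊢
          rw [Equiv.symm_apply_apply]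
          exact hσ
        · intro pe hpe
          simp only [mem_filter, mem_univ, true_and] at hpe ⊢
          exact hpe
        · intro σ _
          exact Equiv.symm_apply_apply _ _
        · intro pe _
          exact Equiv.apply_symm_apply _ _
      rw [hbij]
      set T := (univ : Finset (Fin (r + 1) × Perm (Fin r))).filter
        (fun pe => orbCount (Equiv.Perm.decomposeFin.symm pe) = k + 1) with hT
      have hsplit := Finset.card_filter_add_card_filter_not
        (s := T) (p := fun pe => pe.1 = 0)
      have hsplit2 : (T.filter (fun pe => pe.1 = 0)).card +
          (T.filter (fun pe => ¬ pe.1 = 0)).card = T.card := hsplit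
      have hT0 : (T.filter (fun pe => pe.1 = 0)).card =
          ((univ : Finset (Perm (Fin r))).filter (fun e => orbCount e = k)).card := by
        refine Finset.card_bij' (fun pe _ => pe.2) (fun e _ => ((0 : Fin (r+1)), e))
          ?_ ?_ ?_ ?_
        · rintro ⟨p, e⟩ hpe
          simp only [hT, mem_filter, mem_univ, true_and] at hpe
          obtain ⟨h1, h2⟩ := hpe
          subst h2
          rw [orbCount_decomposeFin, if_pos rfl] at h1
          simp only [mem_filter, mem_univ, true_and]
          omega
        · intro e he
          simp only [mem_filter, mem_univ, true_and] at he
          simp only [hT, mem_filter, mem_univ, true_and]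
          refine ⟨?_, trivial⟩
          rw [orbCount_decomposeFin, if_pos rfl]
          omega
        · rintro ⟨p, e⟩ hpe
          simp only [hT, mem_filter, mem_univ, true_and] at hpe
          show ((0 : Fin (r+1)), e) = (p, e)
          rw [hpe.2]
        · intro e _
          rfl
      have hT1 : (T.filter (fun pe => ¬ pe.1 = 0)).card =
          r * stirling1 r (k + 1) := by
        have heq : T.filter (fun pe => ¬ pe.1 = 0) =
            ((univ : Finset (Fin (r+1))).filter (fun p => p ≠ 0)) ×ˢ
            ((univ : Finset (Perm (Fin r))).filter (fun e => orbCount e = k + 1)) := by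
          ext ⟨p, e⟩
          simp only [hT, mem_filter, mem_univ, true_and, Finset.mem_product, ne_eq]
          constructor
          · rintro ⟨h1, h2⟩
            rw [orbCount_decomposeFin, if_neg h2] at h1
            exact ⟨h2, by omega⟩
          · rintro ⟨h1, h2⟩
            refine ⟨?_, h1⟩
            rw [orbCount_decomposeFin, if_neg h1]
            omega
        rw [heq, Finset.card_product, ih]
        congr 1
        have : (univ : Finset (Fin (r+1))).filter (fun p => p ≠ 0) = univ.erase 0 := by
          ext p
          simp [Finset.mem_erase]
        rw [this, Finset.card_erase_of_mem (mem_univ 0)]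
        simp
      have hrec : stirling1 (r + 1) (k + 1) = r * stirling1 r (k + 1) + stirling1 r k := rfl
      rw [← hsplit2, hT0, hT1, hrec, Nat.add_comm, ih]

lemma sign_eq_orbCount (r : ℕ) (π : Perm (Fin r)) :
    Equiv.Perm.sign π = (-1) ^ (r - orbCount π) := by
  induction r with
  | zero =>
    have hπ : π = 1 := Subsingleton.elim _ _
    subst hπ
    have : orbCount (1 : Perm (Fin 0)) = 0 := by
      rw [orbCount]; simp [Finset.univ_eq_empty]
    rw [this]
    simp
  | succ r ih =>
    obtain ⟨⟨p, e⟩, rfl⟩ : ∃ pe, Equiv.Perm.decomposeFin.symm pe = π :=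
      ⟨Equiv.Perm.decomposeFin π, Equiv.symm_apply_apply _ _⟩
    rw [Equiv.Perm.decomposeFin.symm_sign, orbCount_decomposeFin, ih e]
    have hle : orbCount e ≤ r := by
      have := orbCount_le e
      simpa using this
    by_cases hp : p = 0
    · rw [if_pos hp, if_pos hp, one_mul]
      congr 1
      omega
    · rw [if_neg hp, if_neg hp]
      have h1 : r + 1 - (orbCount e + 0) = (r - orbCount e) + 1 := by omega
      rw [h1, pow_succ]
      exact (mul_comm _ _)

end StirCount

section Splice

variable {r n : ℕ}

def emb (r n : ℕ) : Fin r → Fin (r + n) := Fin.castLE (Nat.le_add_right r n)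

lemma emb_lt (a : Fin r) : ((emb r n a : Fin (r+n)) : ℕ) < r := a.2

lemma emb_inj : Function.Injective (emb r n) := Fin.castLE_injective _

noncomputable def embE (r n : ℕ) : Fin r ≃ {x : Fin (r + n) // (x : ℕ) < r} where
  toFun a := ⟨emb r n a, a.2⟩
  invFun x := ⟨x.1.1, x.2⟩
  left_inv a := rfl
  right_inv x := rfl

noncomputable def extP (π : Perm (Fin r)) : Perm (Fin (r + n)) :=
  π.extendDomain (embE r n)

lemma extP_emb (π : Perm (Fin r)) (a : Fin r) :
    extP (n := n) π (emb r n a) = emb r n (π a) := by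
  have h := Equiv.Perm.extendDomain_apply_subtype π (embE r n) (b := emb r n a) a.2
  rw [extP, h]
  rfl

lemma extP_not (π : Perm (Fin r)) {x : Fin (r + n)} (hx : ¬ ((x : ℕ) < r)) :
    extP π x = x :=
  Equiv.Perm.extendDomain_apply_not_subtype π (embE r n) hx

lemma extP_lt (π : Perm (Fin r)) (x : Fin (r + n)) :
    ((extP π x : Fin (r+n)) : ℕ) < r ↔ (x : ℕ) < r := by
  constructor
  · intro h
    by_contra hx
    rw [extP_not π hx] at h
    exact hx h
  · intro h
    have : x = emb r n ⟨x.1, h⟩ := Fin.ext rfl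
    rw [this, extP_emb]
    exact emb_lt _

lemma extP_inv (π : Perm (Fin r)) : (extP (n := n) π)⁻¹ = extP π⁻¹ := by
  rw [extP, extP, Equiv.Perm.extendDomain_inv]

lemma extP_inv_not (π : Perm (Fin r)) {x : Fin (r + n)} (hx : ¬ ((x : ℕ) < r)) :
    (extP π)⁻¹ x = x := by
  rw [extP_inv]
  exact extP_not π⁻¹ hx

lemma sign_extP (π : Perm (Fin r)) :
    Equiv.Perm.sign (extP (n := n) π) = Equiv.Perm.sign π :=
  Equiv.Perm.sign_extendDomain π (embE r n)

/-- the first `r` elements -/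
noncomputable def Sr (r n : ℕ) : Finset (Fin (r + n)) :=
  univ.filter (fun x => (x : ℕ) < r)

lemma mem_Sr {x : Fin (r + n)} : x ∈ Sr r n ↔ (x : ℕ) < r := by simp [Sr]

/-- the key structural hypothesis: the first `r` elements lie in pairwise disjoint cycles -/
def Dcore (r n : ℕ) (σ : Perm (Fin (r + n))) : Prop :=
  ∀ x y : Fin (r + n), (x : ℕ) < r → (y : ℕ) < r → x ≠ y → ¬ σ.SameCycle x y

lemma Dcore.fix {σ' : Perm (Fin (r + n))} (hD : Dcore r n σ') {z : Fin (r + n)}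
    (hz : (z : ℕ) < r) (hsz : ((σ' z : Fin (r+n)) : ℕ) < r) : σ' z = z := by
  by_contra hne
  exact hD z (σ' z) hz hsz (fun he => hne he.symm) ⟨1, by simp⟩

lemma ret_mul_extP {σ' : Perm (Fin (r + n))} (hD : Dcore r n σ') (π : Perm (Fin r))
    (a : Fin r) :
    ret (σ' * extP π) (Sr r n) (emb r n a) = emb r n (π a) := by
  set σ := σ' * extP (n := n) π with hσdef
  set z := emb r n (π a) with hzdef
  have hz : z ∈ ({z} : Finset (Fin (r+n))) := Finset.mem_singleton_self z
  set P := retN σ' {z} z with hP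
  have hPpos : 0 < P := retN_pos hz
  have hPfix : (σ' ^ P) z = z := by
    have := ret_mem (σ := σ') hz
    rwa [ret, ← hP, Finset.mem_singleton] at this
  have hPmin : ∀ j, 0 < j → j < P → (σ' ^ j) z ≠ z := by
    intro j h0 hj
    have := retN_min (σ := σ') hz h0 (hP ▸ hj)
    rwa [Finset.mem_singleton] at this
  have hA : ∀ j, 0 < j → j < P → ¬ (((σ' ^ j) z : Fin (r+n)) : ℕ) < r := by
    intro j h0 hj hlt
    have hsc : σ'.SameCycle z ((σ' ^ j) z) := ⟨(j : ℤ), by rw [zpow_natCast]⟩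
    exact hD z ((σ' ^ j) z) (emb_lt _) hlt (fun he => hPmin j h0 hj he.symm) hsc
  have hchain : ∀ j, 0 < j → j ≤ P → (σ ^ j) (emb r n a) = (σ' ^ j) z := by
    intro j h0 hj
    induction j with
    | zero => omega
    | succ j ih =>
      rcases Nat.eq_zero_or_pos j with rfl | hjpos
      · rw [pow_one, pow_one, hσdef, Equiv.Perm.mul_apply, extP_emb, ← hzdef]
      · have hjP : j < P := by omega
        calc (σ ^ (j + 1)) (emb r n a) = σ ((σ ^ j) (emb r n a)) := by
              rw [pow_succ', Equiv.Perm.mul_apply]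
          _ = σ ((σ' ^ j) z) := by rw [ih hjpos (by omega)]
          _ = σ' (extP π ((σ' ^ j) z)) := by rw [hσdef, Equiv.Perm.mul_apply]
          _ = σ' ((σ' ^ j) z) := by rw [extP_not π (hA j hjpos hjP)]
          _ = (σ' ^ (j + 1)) z := by rw [pow_succ', Equiv.Perm.mul_apply]
  have hmema : emb r n a ∈ Sr r n := mem_Sr.mpr (emb_lt a)
  have hretN : retN σ (Sr r n) (emb r n a) = P := by
    refine retN_eq hmema hPpos ?_ ?_
    · rw [hchain P hPpos le_rfl, hPfix]
      exact mem_Sr.mpr (emb_lt _)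
    · intro j h0 hj
      rw [hchain j h0 (by omega), mem_Sr]
      exact hA j h0 hj
  rw [ret, hretN, hchain P hPpos le_rfl, hPfix]

lemma sameCycle_mul_extP {σ' : Perm (Fin (r + n))} (hD : Dcore r n σ') (π : Perm (Fin r))
    (a b : Fin r) :
    (σ' * extP π).SameCycle (emb r n a) (emb r n b) ↔ π.SameCycle a b := by
  have hit : ∀ c : ℕ, ∀ x : Fin r,
      (ret (σ' * extP π) (Sr r n))^[c] (emb r n x) = emb r n ((π ^ c) x) := by
    intro c
    induction c with
    | zero => intro x; simp
    | succ c ih =>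
      intro x
      rw [Function.iterate_succ_apply, ret_mul_extP hD, ih, pow_succ,
        Equiv.Perm.mul_apply]
  rw [sameCycle_iff_iterate (mem_Sr.mpr (emb_lt a)) (mem_Sr.mpr (emb_lt b))]
  constructor
  · rintro ⟨c, hc⟩
    rw [hit c a] at hc
    exact ⟨(c : ℤ), by rw [zpow_natCast]; exact emb_inj hc⟩
  · intro h
    obtain ⟨c, _, hc⟩ := h.exists_pow_eq'
    exact ⟨c, by rw [hit c a, hc]⟩

lemma ucard_mul_extP {σ' σ : Perm (Fin (r + n))} (hD : Dcore r n σ') (π : Perm (Fin r))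
    (hσ : σ = σ' * extP π) :
    ((univ : Finset (Fin (r + n))).filter
        (fun x : Fin (r + n) => (x : ℕ) < r ∧ ((σ x : ℕ) < r))).card =
      ((univ : Finset (Fin (r + n))).filter
        (fun z : Fin (r + n) => (z : ℕ) < r ∧ σ' z = z)).card := by
  refine Finset.card_bij (fun x _ => extP π x) ?_ ?_ ?_
  · intro x hx
    simp only [mem_filter, mem_univ, true_and] at hx ⊢
    obtain ⟨h1, h2⟩ := hx
    have h3 : ((extP π x : Fin (r+n)) : ℕ) < r := (extP_lt π x).mpr h1
    rw [hσ, Equiv.Perm.mul_apply] at h2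
    exact ⟨h3, hD.fix h3 h2⟩
  · intro x _ y _ h
    exact (extP π).injective h
  · intro z hz
    simp only [mem_filter, mem_univ, true_and] at hz
    obtain ⟨h1, h2⟩ := hz
    refine ⟨(extP π)⁻¹ z, ?_, Equiv.apply_symm_apply _ _⟩
    simp only [mem_filter, mem_univ, true_and]
    have happ : extP π ((extP π)⁻¹ z) = z := Equiv.apply_symm_apply _ _
    have hlt : (((extP π)⁻¹ z : Fin (r+n)) : ℕ) < r := by
      rw [← extP_lt π, happ]
      exact h1
    refine ⟨hlt, ?_⟩
    rw [hσ, Equiv.Perm.mul_apply, happ, h2]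
    exact h1

lemma mcard_mul_extP {σ' σ : Perm (Fin (r + n))} (π : Perm (Fin r))
    (hσ : σ = σ' * extP π) :
    ((univ : Finset (Fin (r + n))).filter
        (fun t : Fin (r + n) => r ≤ (t : ℕ) ∧ σ t = t)) =
      ((univ : Finset (Fin (r + n))).filter
        (fun t : Fin (r + n) => r ≤ (t : ℕ) ∧ σ' t = t)) := by
  apply Finset.filter_congr
  intro t _
  constructor <;> rintro ⟨h1, h2⟩ <;> refine ⟨h1, ?_⟩
  · rwa [hσ, Equiv.Perm.mul_apply, extP_not π (by omega)] at h2
  · rwa [hσ, Equiv.Perm.mul_apply, extP_not π (by omega)]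

lemma touching_mul_extP {σ' : Perm (Fin (r + n))} (hD : Dcore r n σ') (π : Perm (Fin r)) :
    ((Sr r n).image (orbFinset (σ' * extP π))).card = orbCount π := by
  refine (card_image_transfer (emb r n) (fun a _ => mem_Sr.mpr (emb_lt a))
    (fun b hb => ?_) (orbFinset π) (orbFinset (σ' * extP π)) (fun a _ a' _ => ?_)).symm
  · exact ⟨⟨b.1, mem_Sr.mp hb⟩, mem_univ _, Fin.ext rfl⟩
  · rw [orbFinset_eq_iff, orbFinset_eq_iff, sameCycle_mul_extP hD]

end Splice

section Back
variable {r n : ℕ}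

lemma ret_lt (σ : Perm (Fin (r + n))) (a : Fin r) :
    (ret σ (Sr r n) (emb r n a)).val < r :=
  mem_Sr.mp (ret_mem (mem_Sr.mpr (emb_lt a)))

def toFinr {r n : ℕ} (x : Fin (r + n)) (h : (x : ℕ) < r) : Fin r := ⟨x.val, h⟩

noncomputable def retPermFun (σ : Perm (Fin (r + n))) (a : Fin r) : Fin r :=
  toFinr (ret σ (Sr r n) (emb r n a)) (ret_lt σ a)

lemma retPermFun_inj (σ : Perm (Fin (r + n))) : Function.Injective (retPermFun σ) := by
  intro a b h
  have h2 := congrArg Fin.val h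
  exact emb_inj (ret_inj (mem_Sr.mpr (emb_lt a)) (mem_Sr.mpr (emb_lt b)) (Fin.ext h2))

noncomputable def retPerm (σ : Perm (Fin (r + n))) : Perm (Fin r) :=
  Equiv.ofBijective (retPermFun σ)
    (Finite.injective_iff_bijective.mp (retPermFun_inj σ))

lemma emb_retPerm (σ : Perm (Fin (r + n))) (a : Fin r) :
    emb r n (retPerm σ a) = ret σ (Sr r n) (emb r n a) := Fin.ext rfl

lemma retPerm_mul_extP {σ' : Perm (Fin (r + n))} (hD : Dcore r n σ') (π : Perm (Fin r)) :
    retPerm (σ' * extP π) = π := by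
  apply Equiv.ext
  intro a
  apply emb_inj (n := n)
  rw [emb_retPerm, ret_mul_extP hD]

lemma Dcore_back (σ : Perm (Fin (r + n))) :
    Dcore r n (σ * (extP (retPerm σ))⁻¹) := by
  set π := retPerm σ with hπ
  set σ' := σ * (extP π)⁻¹ with hσ'
  have H : ∀ z w : Fin (r + n), (z : ℕ) < r → (w : ℕ) < r → σ'.SameCycle z w → w = z := by
    intro z w hz hw hsc
    set a : Fin r := ⟨z.1, hz⟩ with ha
    have hza : emb r n a = z := Fin.ext rfl
    set b := π⁻¹ a with hb
    have hextb : extP (n := n) π (emb r n b) = z := by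
      rw [extP_emb, hb, ← Equiv.Perm.mul_apply, mul_inv_cancel, Equiv.Perm.one_apply, hza]
    have hinvz : (extP (n := n) π)⁻¹ z = emb r n b := by
      rw [← hextb]; exact Equiv.symm_apply_apply _ _
    have hmemb : emb r n b ∈ Sr r n := mem_Sr.mpr (emb_lt b)
    set N := retN σ (Sr r n) (emb r n b) with hN
    have hNpos : 0 < N := retN_pos hmemb
    have hret : (σ ^ N) (emb r n b) = z := by
      have h1 : ret σ (Sr r n) (emb r n b) = emb r n (π b) := (emb_retPerm σ b).symm
      rw [ret, ← hN] at h1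
      rw [h1, hb, ← Equiv.Perm.mul_apply, mul_inv_cancel, Equiv.Perm.one_apply, hza]
    have hchain : ∀ j, 0 < j → j ≤ N → (σ' ^ j) z = (σ ^ j) (emb r n b) := by
      intro j h0 hj
      induction j with
      | zero => omega
      | succ j ih =>
        rcases Nat.eq_zero_or_pos j with rfl | hjpos
        · rw [pow_one, pow_one, hσ', Equiv.Perm.mul_apply, hinvz]
        · have hjN : j < N := by omega
          have hout : ¬ (((σ ^ j) (emb r n b) : Fin (r + n)) : ℕ) < r := by
            have := retN_min (σ := σ) hmemb hjpos (hN ▸ hjN)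
            rwa [mem_Sr] at this
          calc (σ' ^ (j + 1)) z = σ' ((σ' ^ j) z) := by
                rw [pow_succ', Equiv.Perm.mul_apply]
            _ = σ' ((σ ^ j) (emb r n b)) := by rw [ih hjpos (by omega)]
            _ = σ ((extP π)⁻¹ ((σ ^ j) (emb r n b))) := by
                rw [hσ', Equiv.Perm.mul_apply]
            _ = σ ((σ ^ j) (emb r n b)) := by rw [extP_inv_not π hout]
            _ = (σ ^ (j + 1)) (emb r n b) := by rw [pow_succ', Equiv.Perm.mul_apply]
    have hperiod : (σ' ^ N) z = z := by rw [hchain N hNpos le_rfl, hret]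
    have houtS : ∀ j, 0 < j → j < N → ¬ (((σ' ^ j) z : Fin (r + n)) : ℕ) < r := by
      intro j h0 hj
      rw [hchain j h0 (by omega)]
      have := retN_min (σ := σ) hmemb h0 (hN ▸ hj)
      rwa [mem_Sr] at this
    obtain ⟨j, _, hj⟩ := hsc.exists_pow_eq'
    have hmod : (σ' ^ j) z = (σ' ^ (j % N)) z := by
      conv_lhs => rw [← Nat.mod_add_div j N]
      rw [pow_add, Equiv.Perm.mul_apply, pow_mul,
        Equiv.Perm.pow_apply_eq_self_of_apply_eq_self (x := z) hperiod]
    rcases Nat.eq_zero_or_pos (j % N) with hs | hs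
    · rw [← hj, hmod, hs, pow_zero]
      rfl
    · exfalso
      rw [← hj, hmod] at hw
      exact houtS (j % N) hs (Nat.mod_lt j hNpos) hw
  intro x y hx hy hxy hsc
  exact hxy ((H x y hx hy hsc).symm)

end Back

section Parity

lemma parity_eq_iff {α : Type*} [Fintype α] [DecidableEq α] (σ : Equiv.Perm α) {i : ℕ}
    (hi : i ≤ 1) : parity σ = i ↔ Equiv.Perm.sign σ = (-1) ^ i := by
  interval_cases i
  · by_cases h : Equiv.Perm.sign σ = 1 <;> simp [parity, h]
  · by_cases h : Equiv.Perm.sign σ = 1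
    · refine iff_of_false (by simp [parity, h]) ?_
      rw [h]
      decide
    · simp only [parity, if_neg h, pow_one]
      rcases Int.units_eq_one_or (Equiv.Perm.sign σ) with h1 | h1
      · exact absurd h1 h
      · simp [h1]

lemma neg_one_pow_mod {a b : ℕ} (h : a % 2 = b % 2) : ((-1 : ℤˣ)) ^ a = (-1) ^ b := by
  have key : ∀ c : ℕ, ((-1 : ℤˣ)) ^ c = (-1) ^ (c % 2) := by
    intro c
    conv_lhs => rw [← Nat.div_add_mod c 2]
    rw [pow_add, pow_mul]
    norm_num
  rw [key a, key b, h]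

lemma parity_mul_extP {r n : ℕ} {σ' σ : Perm (Fin (r + n))} (π : Perm (Fin r))
    (hσ : σ = σ' * extP π) {i k : ℕ} (hi : i ≤ 1) (hk : orbCount π = k) :
    (parity σ = i ↔ parity σ' = (r + k + i) % 2) := by
  have hkr : k ≤ r := by
    have := orbCount_le π
    simp only [Fintype.card_fin] at this
    omega
  have hsign : Equiv.Perm.sign σ = Equiv.Perm.sign σ' * (-1) ^ (r - k) := by
    rw [hσ, map_mul, sign_extP, sign_eq_orbCount r π, hk]
  have hw : ((-1 : ℤˣ)) ^ (r - k) * ((-1 : ℤˣ)) ^ (r - k) = 1 := by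
    rw [← pow_add]
    rw [neg_one_pow_mod (b := 0) (by omega), pow_zero]
  rw [parity_eq_iff σ hi, parity_eq_iff σ' (by omega : (r + k + i) % 2 ≤ 1), hsign]
  have hpow : ((-1 : ℤˣ)) ^ ((r + k + i) % 2) = (-1) ^ i * (-1) ^ (r - k) := by
    rw [← pow_add]
    exact neg_one_pow_mod (by omega)
  rw [hpow]
  constructor
  · intro h
    rw [← h, mul_assoc, hw, mul_one]
  · intro h
    rw [h, mul_assoc, hw, mul_one]

end Parity

theorem Dgen_cycles_parity_card_eq_aux (r u m n k i : ℕ) (hi : i ≤ 1) :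
    ((Dgen r u m n).filter
        (fun σ => parity σ = i ∧ touchingCycles r n σ = k)).card =
      stirling1 r k *
        ((Drum r u m n).filter (fun σ => parity σ = (r + k + i) % 2)).card := by
  classical
  have htc : ∀ σ : Perm (Fin (r + n)),
      touchingCycles r n σ = ((Sr r n).image (orbFinset σ)).card := fun σ => rfl
  rw [← card_orbCount_eq r k, ← Finset.card_product]
  refine Finset.card_nbij'
    (fun σ => (retPerm σ, σ * (extP (retPerm σ))⁻¹))
    (fun pr => pr.2 * extP pr.1) ?_ ?_ ?_ ?_
  · -- forward membership
    intro σ hσ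
    simp only [Finset.mem_coe, Dgen, mem_filter, mem_univ, true_and] at hσ
    obtain ⟨⟨hu, hm⟩, hpar, hk⟩ := hσ
    set π := retPerm σ with hπ
    set σ' := σ * (extP π)⁻¹ with hσ'
    have hD : Dcore r n σ' := Dcore_back σ
    have hre : σ = σ' * extP π := by
      rw [hσ', inv_mul_cancel_right]
    have horb : orbCount π = k := by
      rw [htc σ, hre, touching_mul_extP hD π] at hk
      exact hk
    simp only [Finset.mem_coe, Finset.mem_product, Drum, mem_filter, mem_univ, true_and]
    refine ⟨horb, ⟨hD, ?_, ?_⟩, ?_⟩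
    · rw [← hu, ucard_mul_extP hD π hre]
    · rw [← hm, mcard_mul_extP π hre]
    · exact (parity_mul_extP π hre hi horb).mp hpar
  · -- backward membership
    rintro ⟨π, σ'⟩ hpr
    simp only [Finset.mem_coe, Finset.mem_product, Drum, mem_filter, mem_univ, true_and] at hpr
    obtain ⟨horb, ⟨hD, hu, hm⟩, hpar⟩ := hpr
    have hD' : Dcore r n σ' := hD
    simp only [Finset.mem_coe, Dgen, mem_filter, mem_univ, true_and]
    have hre : (σ' * extP π : Perm (Fin (r + n))) = σ' * extP π := rfl
    refine ⟨⟨?_, ?_⟩, ?_, ?_⟩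
    · rw [ucard_mul_extP hD' π rfl, hu]
    · rw [mcard_mul_extP π rfl, hm]
    · exact (parity_mul_extP π rfl hi horb).mpr hpar
    · rw [htc, touching_mul_extP hD' π, horb]
  · intro σ _
    exact inv_mul_cancel_right σ (extP (retPerm σ))
  · rintro ⟨π, σ'⟩ hpr
    simp only [Finset.mem_coe, Finset.mem_product, Drum, mem_filter, mem_univ, true_and] at hpr
    obtain ⟨horb, ⟨hD, hu, hm⟩, hpar⟩ := hpr
    have h1 : retPerm (σ' * extP π) = π := retPerm_mul_extP hD π
    rw [Prod.mk.injEq]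
    constructor
    · exact h1
    · rw [h1, mul_inv_cancel_right]

theorem Dgen_cycles_parity_card_eq (r u m n k i : ℕ) (hi : i ≤ 1) :
    ((Dgen r u m n).filter
        (fun σ => parity σ = i ∧ touchingCycles r n σ = k)).card =
      stirling1 r k *
        ((Drum r u m n).filter (fun σ => parity σ = (r + k + i) % 2)).card := by
  exact Dgen_cycles_parity_card_eq_aux r u m n k i hi
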